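/- For any two partitions P and Q of the vertex set V of a graph G, the number of edges crossing P plus the number of edges crossing Q is at least the number of edges crossing the meet P∧Q plus the number of edges crossing the join P∨Q (in the partition lattice ordered by refinement). -/
import Mathlib

open scoped Classical

/-- The set of edges of `G` whose endpoints lie in distinct parts of the partition
(setoid) `P`. -/
noncomputable def crossEdges {V : Type*} [Fintype V] (G : SimpleGraph V) (P : Setoid V) :
    Finset (Sym2 V) :=
  letI : Fintype G.edgeSet := Fintype.ofFinite _
  G.edgeFinset.filter fun e => ∃ u v : V, e = s(u, v) ∧ ¬ P.r u v

/-- Partition uncrossing on the lattice: the number of edges crossing `P` plus the number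
crossing `Q` is at least the number crossing the meet `P ⊓ Q` (common refinement) plus the
number crossing the join `P ⊔ Q`. -/
theorem crossEdges_meet_join_le {V : Type*} [Fintype V] (G : SimpleGraph V)
    (P Q : Setoid V) :
    (crossEdges G (P ⊓ Q)).card + (crossEdges G (P ⊔ Q)).card ≤
      (crossEdges G P).card + (crossEdges G Q).card := by
  have h1 : crossEdges G (P ⊔ Q) ⊆ crossEdges G P ∩ crossEdges G Q := by
    intro e he
    simp only [crossEdges, Finset.mem_filter, Finset.mem_inter] at he ⊢
    obtain ⟨hE, u, v, rfl, h⟩ := he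
    exact ⟨⟨hE, u, v, rfl, fun hp => h (Setoid.le_def.mp le_sup_left hp)⟩,
      ⟨hE, u, v, rfl, fun hq => h (Setoid.le_def.mp le_sup_right hq)⟩⟩
  have h2 : crossEdges G (P ⊓ Q) ⊆ crossEdges G P ∪ crossEdges G Q := by
    intro e he
    simp only [crossEdges, Finset.mem_filter, Finset.mem_union] at he ⊢
    obtain ⟨hE, u, v, rfl, h⟩ := he
    rw [show ((P ⊓ Q) u v) = (P u v ∧ Q u v) from propext Setoid.inf_iff_and, not_and_or] at h
    rcases h with h | h
    · exact Or.inl ⟨hE, u, v, rfl, h⟩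
    · exact Or.inr ⟨hE, u, v, rfl, h⟩
  calc (crossEdges G (P ⊓ Q)).card + (crossEdges G (P ⊔ Q)).card
      ≤ (crossEdges G P ∪ crossEdges G Q).card + (crossEdges G P ∩ crossEdges G Q).card :=
        add_le_add (Finset.card_le_card h2) (Finset.card_le_card h1)
    _ = (crossEdges G P).card + (crossEdges G Q).card :=
        Finset.card_union_add_card_inter _ _
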